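/- arXiv:2307.04032 — 4 statements merged into one kernel-verified Lean document; each statement's English description precedes it below -/
import Mathlib

section
/- Let g, h : D → ℂ be nonzero Laurent series of finite order defined on a small punctured disk around 0, with ord₀(g) ≥ ord₀(h). Then for all t ≠ 0 with |t| sufficiently small, the number of nonzero solutions s of g(s) − t·h(s) = 0 that converge to 0 as t → 0, counted with multiplicity, equals ord₀(g) − ord₀(h). -/
/-! For `s ≠ 0` the equation `g s = t * h s` is `s ^ n * U s = t * V s` with `n = a - b`.
If `n = 0` it has no solutions near `0` for small `t`, because `U 0 ≠ 0`. If `n > 0`, choose an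
analytic `n`-th root `φ` of `U / V` near `0` (a branch of `exp (log (U / V) / n)`); the equation
becomes `ψ s ^ n = t` for the local coordinate `ψ z = z * φ z`. Its solutions near `0` are the
images of the `n` distinct `n`-th roots of `t` under the local inverse of `ψ`, and each of them
is a simple zero since `ψ' ≠ 0` there. -/

open scoped Topology

open Metric Filter Polynomial Finset

theorem HasStrictDerivAt.exists_card_eq_card_of_subset_ball {𝕜 : Type*}
    [NontriviallyNormedField 𝕜] [CompleteSpace 𝕜] {f : 𝕜 → 𝕜} {f' a : 𝕜}
    (hf : HasStrictDerivAt f f' a) (hf' : f' ≠ 0) :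
    ∃ ε > 0, ∀ ε' > 0, ε' ≤ ε → ∃ ρ > 0, ∀ T : Finset 𝕜, ↑T ⊆ ball (f a) ρ →
      ∃ S : Finset 𝕜, (∀ s, s ∈ S ↔ s ∈ ball a ε' ∧ f s ∈ T) ∧ #S = #T := by
  classical
  set L := hf.localInverse f f' a hf'
  obtain ⟨ε, hε, hleft⟩ := eventually_nhds_iff_ball.mp (hf.eventually_left_inverse hf')
  refine ⟨ε, hε, fun ε' hε' hε'ε => ?_⟩
  obtain ⟨ρ, hρ, hright⟩ := eventually_nhds_iff_ball.mp <| (hf.eventually_right_inverse hf').and <|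
    (hf.hasStrictFDerivAt_equiv hf').localInverse_tendsto.eventually (ball_mem_nhds a hε')
  refine ⟨ρ, hρ, fun T hT => ⟨T.image L, fun s => ?_, card_image_of_injOn ?_⟩⟩
  · simp only [mem_image]
    constructor
    · rintro ⟨τ, hτ, rfl⟩
      obtain ⟨hfL, hL⟩ := hright τ (hT hτ)
      exact ⟨hL, by rwa [hfL]⟩
    · rintro ⟨hs, hfs⟩
      exact ⟨f s, hfs, hleft s (ball_subset_ball hε'ε hs)⟩
  · intro τ₁ h₁ τ₂ h₂ h
    rw [← (hright τ₁ (hT h₁)).1, ← (hright τ₂ (hT h₂)).1]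
    exact congrArg f h

theorem IsPrimitiveRoot.card_nthRootsFinset_of_pow_eq {R : Type*} [CommRing R] [IsDomain R]
    {ζ : R} {n : ℕ} (hζ : IsPrimitiveRoot ζ n) {a α : R} (ha : a ≠ 0) (hα : α ^ n = a) :
    #(nthRootsFinset n a) = n := by
  classical
  rw [nthRootsFinset_def, Multiset.toFinset_card_of_nodup (hζ.nthRoots_nodup ha),
    hζ.card_nthRoots, if_pos ⟨α, hα⟩]

theorem Complex.card_nthRootsFinset {n : ℕ} (hn : n ≠ 0) {t : ℂ} (ht : t ≠ 0) :
    #(nthRootsFinset n t) = n :=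
  (Complex.isPrimitiveRoot_exp n hn).card_nthRootsFinset_of_pow_eq ht
    (IsAlgClosed.exists_pow_nat_eq t (Nat.pos_of_ne_zero hn)).choose_spec

theorem AnalyticAt.exists_analyticAt_pow_eventuallyEq {W : ℂ → ℂ} {z₀ : ℂ}
    (hW : AnalyticAt ℂ W z₀) (hW₀ : W z₀ ≠ 0) {n : ℕ} (hn : n ≠ 0) :
    ∃ φ : ℂ → ℂ, AnalyticAt ℂ φ z₀ ∧ ∀ᶠ z in 𝓝 z₀, φ z ^ n = W z := by
  obtain ⟨c, hc⟩ := IsAlgClosed.exists_pow_nat_eq (W z₀) (Nat.pos_of_ne_zero hn)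
  have hn' : (n : ℂ) ≠ 0 := Nat.cast_ne_zero.mpr hn
  refine ⟨fun z => c * Complex.exp (Complex.log (W z / W z₀) / n), ?_, ?_⟩
  · have h1 : W z₀ / W z₀ ∈ Complex.slitPlane := by
      rw [div_self hW₀]; exact Complex.one_mem_slitPlane
    exact analyticAt_const.mul (((hW.div_const).clog h1).div_const).cexp
  · filter_upwards [hW.continuousAt.eventually_ne hW₀] with z hz
    rw [mul_pow, ← Complex.exp_nat_mul, mul_div_cancel₀ _ hn',
      Complex.exp_log (div_ne_zero hz hW₀), hc, mul_div_cancel₀ _ hW₀]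

theorem analyticOrderAt_mul_pow_sub_pow_eq_one {𝕜 : Type*} [NontriviallyNormedField 𝕜]
    [CharZero 𝕜] {V ψ : 𝕜 → 𝕜} {s : 𝕜} {n : ℕ} (hV : AnalyticAt 𝕜 V s)
    (hψ : AnalyticAt 𝕜 ψ s) (hVs : V s ≠ 0) (hψs : ψ s ≠ 0) (hψ' : deriv ψ s ≠ 0)
    (hn : n ≠ 0) :
    analyticOrderAt (fun z => V z * (ψ z ^ n - ψ s ^ n)) s = 1 := by
  refine AnalyticAt.analyticOrderAt_eq_one_of_zero_deriv_ne_zero (by fun_prop) (by simp) ?_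
  rw [deriv_fun_mul hV.differentiableAt (by fun_prop), deriv_sub_const,
    deriv_fun_pow hψ.differentiableAt, sub_self, mul_zero, zero_add]
  exact mul_ne_zero hVs (mul_ne_zero (mul_ne_zero (Nat.cast_ne_zero.mpr hn)
    (pow_ne_zero _ hψs)) hψ')

theorem exists_pow_mul_eventuallyEq_mul_pow {U V : ℂ → ℂ} (hU : AnalyticAt ℂ U 0)
    (hV : AnalyticAt ℂ V 0) (hU₀ : U 0 ≠ 0) (hV₀ : V 0 ≠ 0) {n : ℕ} (hn : n ≠ 0) :
    ∃ ψ : ℂ → ℂ, AnalyticAt ℂ ψ 0 ∧ ψ 0 = 0 ∧ deriv ψ 0 ≠ 0 ∧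
      ∀ᶠ z in 𝓝 0, z ^ n * U z = V z * ψ z ^ n := by
  obtain ⟨φ, hφ, hφn⟩ := (hU.div hV hV₀).exists_analyticAt_pow_eventuallyEq (div_ne_zero hU₀ hV₀) hn
  have hφ₀ : φ 0 ≠ 0 := by
    intro h
    have := hφn.self_of_nhds
    rw [h, zero_pow hn, eq_comm] at this
    exact div_ne_zero hU₀ hV₀ this
  refine ⟨fun z => z * φ z, analyticAt_id.mul hφ, zero_mul _, ?_, ?_⟩
  · rw [deriv_fun_mul differentiableAt_fun_id hφ.differentiableAt]
    simpa using hφ₀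
  · filter_upwards [hφn, hV.continuousAt.eventually_ne hV₀] with z hz hVz
    rw [mul_pow, hz, Pi.div_apply]
    field_simp

theorem exists_card_zeros_pow_mul_sub_of_ne_zero {U V : ℂ → ℂ} (hU : AnalyticAt ℂ U 0)
    (hV : AnalyticAt ℂ V 0) (hU₀ : U 0 ≠ 0) (hV₀ : V 0 ≠ 0) {n : ℕ} (hn : n ≠ 0) :
    ∃ ε > 0, ∀ ε' > 0, ε' ≤ ε → ∃ δ > 0, ∀ t : ℂ, 0 < ‖t‖ → ‖t‖ < δ →
      ∃ S : Finset ℂ, (∀ s, s ∈ S ↔ s ≠ 0 ∧ ‖s‖ < ε' ∧ s ^ n * U s = t * V s) ∧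
        (∀ s ∈ S, analyticOrderAt (fun z => z ^ n * U z - t * V z) s = 1) ∧ #S = n := by
  obtain ⟨ψ, hψ, hψ₀, hψ'₀, hfactor⟩ := exists_pow_mul_eventuallyEq_mul_pow hU hV hU₀ hV₀ hn
  obtain ⟨ε₁, hε₁, hlocal⟩ := eventually_nhds_iff_ball.mp <|
    hψ.eventually_analyticAt.and <| hV.eventually_analyticAt.and <|
    (hV.continuousAt.eventually_ne hV₀).and <|
    (hψ.deriv.continuousAt.eventually_ne hψ'₀).and hfactor
  obtain ⟨ε₂, hε₂, hcount⟩ := hψ.hasStrictDerivAt.exists_card_eq_card_of_subset_ball hψ'₀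
  refine ⟨min ε₁ ε₂, lt_min hε₁ hε₂, fun ε' hε' hε'ε => ?_⟩
  obtain ⟨ρ, hρ, hρcount⟩ := hcount ε' hε' (hε'ε.trans (min_le_right _ _))
  refine ⟨ρ ^ n, pow_pos hρ n, fun t ht htδ => ?_⟩
  have ht₀ : t ≠ 0 := norm_pos_iff.mp ht
  have hroots : ↑(nthRootsFinset n t) ⊆ ball (ψ 0) ρ := by
    intro τ hτ
    rw [mem_coe, mem_nthRootsFinset (Nat.pos_of_ne_zero hn)] at hτ
    rw [hψ₀, mem_ball_zero_iff, ← pow_lt_pow_iff_left₀ (norm_nonneg τ) hρ.le hn, ← norm_pow, hτ]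
    exact htδ
  obtain ⟨S, hS, hcard⟩ := hρcount _ hroots
  have hε' : ball (0 : ℂ) ε' ⊆ ball 0 ε₁ := ball_subset_ball (hε'ε.trans (min_le_left _ _))
  have hsolve : ∀ s ∈ ball (0 : ℂ) ε₁, s ^ n * U s = t * V s ↔ ψ s ^ n = t := by
    intro s hs
    obtain ⟨-, -, hVs, -, hfs⟩ := hlocal s hs
    rw [hfs, mul_comm t, mul_right_inj' hVs]
  refine ⟨S, fun s => ?_, fun s hs => ?_, hcard.trans (Complex.card_nthRootsFinset hn ht₀)⟩
  · rw [hS, mem_nthRootsFinset (Nat.pos_of_ne_zero hn), ← mem_ball_zero_iff]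
    constructor
    · rintro ⟨hs, hψs⟩
      refine ⟨?_, hs, (hsolve s (hε' hs)).2 hψs⟩
      rintro rfl
      rw [hψ₀, zero_pow hn] at hψs
      exact ht₀ hψs.symm
    · rintro ⟨-, hs, h⟩
      exact ⟨hs, (hsolve s (hε' hs)).1 h⟩
  · obtain ⟨hs, hψs⟩ := (hS s).mp hs
    rw [mem_nthRootsFinset (Nat.pos_of_ne_zero hn)] at hψs
    obtain ⟨hψa, hVa, hVs, hψ's, -⟩ := hlocal s (hε' hs)
    have hfactor_near : (fun z => z ^ n * U z - t * V z) =ᶠ[𝓝 s]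
        fun z => V z * (ψ z ^ n - ψ s ^ n) := by
      filter_upwards [isOpen_ball.mem_nhds (hε' hs)] with z hz
      obtain ⟨-, -, -, -, hfz⟩ := hlocal z hz
      rw [hfz, hψs]
      ring
    rw [analyticOrderAt_congr hfactor_near]
    exact analyticOrderAt_mul_pow_sub_pow_eq_one hVa hψa hVs (ne_zero_pow hn (hψs ▸ ht₀)) hψ's hn

theorem exists_forall_ne_mul {U V : ℂ → ℂ} (hU : ContinuousAt U 0) (hV : ContinuousAt V 0)
    (hU₀ : U 0 ≠ 0) :
    ∃ r > 0, ∀ t s : ℂ, ‖t‖ < r → ‖s‖ < r → U s ≠ t * V s := by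
  have hcont : ContinuousAt (fun p : ℂ × ℂ => U p.2 - p.1 * V p.2) (0, 0) :=
    (hU.comp_of_eq continuousAt_snd rfl).sub
      (continuousAt_fst.mul (hV.comp_of_eq continuousAt_snd rfl))
  obtain ⟨r, hr, hne⟩ := Metric.eventually_nhds_iff.mp (hcont.eventually_ne (by simpa using hU₀))
  refine ⟨r, hr, fun t s ht hs => sub_ne_zero.mp (hne (y := (t, s)) ?_)⟩
  simpa [Prod.dist_eq] using ⟨ht, hs⟩

theorem exists_card_zeros_pow_mul_sub {U V : ℂ → ℂ} (hU : AnalyticAt ℂ U 0)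
    (hV : AnalyticAt ℂ V 0) (hU₀ : U 0 ≠ 0) (hV₀ : V 0 ≠ 0) (n : ℕ) :
    ∃ ε > 0, ∀ ε' > 0, ε' ≤ ε → ∃ δ > 0, ∀ t : ℂ, 0 < ‖t‖ → ‖t‖ < δ →
      ∃ S : Finset ℂ, (∀ s, s ∈ S ↔ s ≠ 0 ∧ ‖s‖ < ε' ∧ s ^ n * U s = t * V s) ∧
        (∀ s ∈ S, analyticOrderAt (fun z => z ^ n * U z - t * V z) s = 1) ∧ #S = n := by
  rcases eq_or_ne n 0 with rfl | hn
  · obtain ⟨r, hr, hne⟩ := exists_forall_ne_mul hU.continuousAt hV.continuousAt hU₀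
    refine ⟨r, hr, fun ε' _ hε' => ⟨r, hr, fun t _ ht => ⟨∅, fun s => ?_, by simp, by simp⟩⟩⟩
    simp only [notMem_empty, false_iff, pow_zero, one_mul, not_and]
    exact fun _ hs => hne t s ht (hs.trans_le hε')
  · exact exists_card_zeros_pow_mul_sub_of_ne_zero hU hV hU₀ hV₀ hn

theorem zpow_mul_eq_mul_zpow_mul_iff {K : Type*} [Field K] {s : K} (hs : s ≠ 0) {a b : ℤ}
    (hab : b ≤ a) (u v t : K) :
    s ^ a * u = t * (s ^ b * v) ↔ s ^ (a - b).toNat * u = t * v := by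
  have hsplit : s ^ a = s ^ b * s ^ (a - b).toNat := by
    rw [← zpow_natCast, ← zpow_add₀ hs, Int.toNat_of_nonneg (sub_nonneg.2 hab), add_sub_cancel]
  rw [hsplit, mul_assoc, mul_left_comm t, mul_right_inj' (zpow_ne_zero b hs)]

/-- If `g = s^a·U`, `h = s^b·V` are Laurent series of finite order on a small
punctured disk (U, V holomorphic and nonvanishing at 0) with `ord₀ g = a ≥ b = ord₀ h`,
then for all `t ≠ 0` with `|t|` small enough, the number of nonzero solutions of
`g(s) = t·h(s)` converging to `0` as `t → 0`, counted with multiplicity, equals `a - b`.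
(The multiplicity at a solution `s` is the analytic order there of
`z ↦ z^{a-b}·U z - t·V z`, which is `s^{-b}·(g - t·h)`.) -/
theorem stmt_1 (g h U V : ℂ → ℂ) (a b : ℤ) (R : ℝ) (hR : 0 < R)
    (hU : ∀ z ∈ Metric.ball (0 : ℂ) R, AnalyticAt ℂ U z)
    (hV : ∀ z ∈ Metric.ball (0 : ℂ) R, AnalyticAt ℂ V z)
    (hU0 : U 0 ≠ 0) (hV0 : V 0 ≠ 0)
    (hg : ∀ s ∈ Metric.ball (0 : ℂ) R, s ≠ 0 → g s = s ^ a * U s)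
    (hh : ∀ s ∈ Metric.ball (0 : ℂ) R, s ≠ 0 → h s = s ^ b * V s)
    (hab : b ≤ a) :
    ∃ ε > 0, ε ≤ R ∧ ∀ ε' > 0, ε' ≤ ε →
      ∃ δ > 0, ∀ t : ℂ, 0 < ‖t‖ → ‖t‖ < δ →
        ∃ (S : Finset ℂ) (m : ℂ → ℕ),
          (∀ s : ℂ, s ∈ S ↔ (s ≠ 0 ∧ ‖s‖ < ε' ∧ g s = t * h s)) ∧
          (∀ s ∈ S, ∃ hA : AnalyticAt ℂ (fun z => z ^ (a - b).toNat * U z - t * V z) s,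
            analyticOrderAt (fun z => z ^ (a - b).toNat * U z - t * V z) s = (m s : ℕ∞)) ∧
          (∑ s ∈ S, (m s : ℤ)) = a - b := by
  obtain ⟨ε, hε, hcount⟩ := exists_card_zeros_pow_mul_sub (hU 0 (mem_ball_self hR))
    (hV 0 (mem_ball_self hR)) hU0 hV0 (a - b).toNat
  refine ⟨min ε R, lt_min hε hR, min_le_right _ _, fun ε' hε' hε'le => ?_⟩
  obtain ⟨δ, hδ, hzeros⟩ := hcount ε' hε' (hε'le.trans (min_le_left _ _))
  refine ⟨δ, hδ, fun t ht htδ => ?_⟩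
  obtain ⟨S, hS, hord, hcard⟩ := hzeros t ht htδ
  have hR' : ∀ s : ℂ, ‖s‖ < ε' → s ∈ ball (0 : ℂ) R := fun s hs =>
    mem_ball_zero_iff.mpr (hs.trans_le (hε'le.trans (min_le_right _ _)))
  refine ⟨S, fun _ => 1, fun s => ?_, fun s hs => ⟨?_, by simpa using hord s hs⟩, ?_⟩
  · rw [hS]
    refine and_congr_right fun hs₀ => and_congr_right fun hs => ?_
    rw [hg s (hR' s hs) hs₀, hh s (hR' s hs) hs₀, zpow_mul_eq_mul_zpow_mul_iff hs₀ hab]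
  · have hsR := hR' s ((hS s).mp hs).2.1
    exact ((analyticAt_id.pow _).mul (hU s hsR)).sub (analyticAt_const.mul (hV s hsR))
  · rw [sum_const, hcard, nsmul_eq_mul, Nat.cast_one, mul_one,
      Int.toNat_of_nonneg (sub_nonneg.2 hab)]
end

section
/- Let f(x,y) = x + x²y. For all t ≠ 0, the polynomial f_t := f − t(x+y) has exactly two critical points in ℂ², both nondegenerate (Morse), and as t → 0 both critical points escape to infinity (their norms tend to ∞). -/
/-- The deformed polynomial `f_t(x,y) = x + x²y − t(x+y)`. -/
noncomputable def F8 (t x y : ℂ) : ℂ := x + x ^ 2 * y - t * (x + y)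

/-- Partial derivative of `F8 t` in `x`. -/
noncomputable def F8x (t : ℂ) (p : ℂ × ℂ) : ℂ := deriv (fun x => F8 t x p.2) p.1

/-- Partial derivative of `F8 t` in `y`. -/
noncomputable def F8y (t : ℂ) (p : ℂ × ℂ) : ℂ := deriv (fun y => F8 t p.1 y) p.2

/-- Critical locus of `F8 t`. -/
noncomputable def Crit8 (t : ℂ) : Set (ℂ × ℂ) := {p | F8x t p = 0 ∧ F8y t p = 0}

/-- Hessian determinant of `F8 t`. -/
noncomputable def Hess8 (t : ℂ) (p : ℂ × ℂ) : ℂ :=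
  deriv (fun x => F8x t (x, p.2)) p.1 * deriv (fun y => F8y t (p.1, y)) p.2
    - deriv (fun y => F8x t (p.1, y)) p.2 * deriv (fun x => F8y t (x, p.2)) p.1

/-
Solving the critical equations gives `x² = t` and `2xy = t − 1`: for `t ≠ 0` the two square
roots `±s` of `t` each determine one critical point, at which the Hessian `−4x²` equals
`−4t ≠ 0`. The equations also force `|t − 1|² = 4|t||y|²`, so as `t → 0` the `y`-coordinate
of every critical point blows up like `1/(2√|t|)`.
-/

lemma F8x_eq (t : ℂ) (p : ℂ × ℂ) : F8x t p = 1 + 2 * p.1 * p.2 - t := by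
  simp (disch := fun_prop) [F8x, F8, deriv_fun_sub, deriv_fun_add, deriv_fun_mul]

lemma F8y_eq (t : ℂ) (p : ℂ × ℂ) : F8y t p = p.1 ^ 2 - t := by
  simp (disch := fun_prop) [F8y, F8, deriv_fun_sub, deriv_fun_add, deriv_fun_mul]

lemma Hess8_eq (t : ℂ) (p : ℂ × ℂ) : Hess8 t p = -(4 * p.1 ^ 2) := by
  simp (disch := fun_prop) [Hess8, F8x_eq, F8y_eq, deriv_fun_sub, deriv_fun_add, deriv_fun_mul]
  ring

lemma mem_Crit8_iff {t : ℂ} {p : ℂ × ℂ} :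
    p ∈ Crit8 t ↔ p.1 ^ 2 = t ∧ 2 * p.1 * p.2 = t - 1 := by
  simp only [Crit8, Set.mem_ofPred_eq, F8x_eq, F8y_eq, sub_eq_zero]
  constructor
  · rintro ⟨hx, hy⟩
    exact ⟨hy, by linear_combination hx⟩
  · rintro ⟨hy, hx⟩
    exact ⟨by linear_combination hx, hy⟩

lemma Hess8_of_mem_Crit8 {t : ℂ} {p : ℂ × ℂ} (hp : p ∈ Crit8 t) : Hess8 t p = -4 * t := by
  rw [Hess8_eq, (mem_Crit8_iff.mp hp).1]
  ring

noncomputable def critPt8 (t s : ℂ) : ℂ × ℂ := (s, (t - 1) / (2 * s))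

lemma Crit8_eq_pair {t s : ℂ} (hs : s ^ 2 = t) (hs0 : s ≠ 0) :
    Crit8 t = {critPt8 t s, critPt8 t (-s)} := by
  ext p
  simp only [mem_Crit8_iff, critPt8, Set.mem_insert_iff, Set.mem_singleton_iff, Prod.ext_iff]
  constructor
  · rintro ⟨hx, hxy⟩
    have hx0 : p.1 ≠ 0 := fun h => pow_ne_zero 2 hs0 (by rw [hs, ← hx, h]; ring)
    have hy : p.2 = (t - 1) / (2 * p.1) := by field_simp; linear_combination hxy
    have hroots : (p.1 - s) * (p.1 + s) = 0 := by linear_combination hx - hs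
    rcases mul_eq_zero.mp hroots with h | h
    · have h : p.1 = s := sub_eq_zero.mp h
      exact .inl ⟨h, h ▸ hy⟩
    · have h : p.1 = -s := eq_neg_of_add_eq_zero_left h
      exact .inr ⟨h, h ▸ hy⟩
  · rintro (⟨hx, hy⟩ | ⟨hx, hy⟩) <;> rw [hx, hy] <;>
      exact ⟨by simp [hs], by field_simp⟩

lemma sq_norm_sub_one_of_mem_Crit8 {t : ℂ} {p : ℂ × ℂ} (hp : p ∈ Crit8 t) :
    ‖t - 1‖ ^ 2 = 4 * ‖t‖ * ‖p.2‖ ^ 2 := by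
  obtain ⟨hx, hxy⟩ := mem_Crit8_iff.mp hp
  have h : (t - 1) ^ 2 = 4 * t * p.2 ^ 2 := by rw [← hxy, ← hx]; ring
  simpa [norm_pow, norm_mul] using congrArg norm h

lemma lt_norm_snd_of_mem_Crit8 {R : ℝ} (hR : 0 < R) {t : ℂ}
    (ht : ‖t‖ < min (1 / 2) (1 / (16 * R ^ 2))) {p : ℂ × ℂ} (hp : p ∈ Crit8 t) : R < ‖p.2‖ := by
  have ht₁ : ‖t‖ < 1 / 2 := ht.trans_le (min_le_left _ _)
  have htR : ‖t‖ * (16 * R ^ 2) < 1 := by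
    rw [← lt_div_iff₀ (by positivity)]; exact ht.trans_le (min_le_right _ _)
  have hsub : 1 / 2 ≤ ‖t - 1‖ := by
    have := norm_sub_norm_le (1 : ℂ) t
    rw [norm_one, norm_sub_rev] at this
    linarith
  have hlow : 1 / 4 ≤ 4 * ‖t‖ * ‖p.2‖ ^ 2 := by
    nlinarith [sq_norm_sub_one_of_mem_Crit8 hp]
  have hsq : R ^ 2 < ‖p.2‖ ^ 2 := by nlinarith [norm_nonneg t]
  exact (pow_lt_pow_iff_left₀ hR.le (norm_nonneg _) two_ne_zero).mp hsq

/-- For all `t ≠ 0`, `f_t = x + x²y − t(x+y)` has exactly two critical points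
in `ℂ²`, both nondegenerate (Morse), and as `t → 0` both critical points escape to infinity:
for every `R > 0` there is `δ > 0` such that for `0 < |t| < δ` every critical point of `f_t`
has norm `> R`. -/
theorem stmt_8 :
    (∀ t : ℂ, t ≠ 0 → ∃ p q : ℂ × ℂ, p ≠ q ∧ Crit8 t = {p, q} ∧
        Hess8 t p ≠ 0 ∧ Hess8 t q ≠ 0) ∧
    (∀ R > (0 : ℝ), ∃ δ > (0 : ℝ), ∀ t : ℂ, 0 < ‖t‖ → ‖t‖ < δ →
        ∀ p ∈ Crit8 t, R < ‖p‖) := by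
  constructor
  · intro t ht
    obtain ⟨s, hs⟩ := IsAlgClosed.exists_pow_nat_eq t two_pos
    have hs0 : s ≠ 0 := by rintro rfl; simp [← hs] at ht
    refine ⟨critPt8 t s, critPt8 t (-s), ?_, Crit8_eq_pair hs hs0, ?_, ?_⟩
    · intro h
      exact hs0 (CharZero.eq_neg_self_iff.mp (congrArg Prod.fst h))
    all_goals
      rw [Hess8_of_mem_Crit8 (by simp [Crit8_eq_pair hs hs0])]
      simpa using ht
  · intro R hR
    refine ⟨min (1 / 2) (1 / (16 * R ^ 2)), by positivity, fun t _ ht p hp => ?_⟩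
    exact (lt_norm_snd_of_mem_Crit8 hR ht hp).trans_le (norm_snd_le p)
end

section
/- Let f(x,y) = xy + (1/3)x³y² and ℓ(x,y) = x + y. There is a branch of the polar curve {y − x + x²y² − (2/3)x³y = 0} at infinity parametrized by x(s) = s, y(s) = −1/s² + higher order (Laurent) terms, and along it ord₀ f(x(s),y(s)) = −1 and ord₀ ℓ(x(s),y(s)) = −2; in particular ‖f(x(s),y(s))‖ → ∞ as s → 0, and ord₀(f∘γ) − ord₀(ℓ∘γ) = 1. -/
open scoped Topology
open Filter Complex

/-!
Substituting `x = s`, `y = s⁻² w` into the polar equation and clearing `s⁻²` leaves the quadratic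
`w² + (1 - (2/3)s³) w - s³ = 0`, whose discriminant equals `1` at `s = 0`. Its root
`w = (-b - √(b² - 4c)) / 2`, with the principal square root, is therefore analytic at `0` with
`w 0 = -1`. Along `y = s⁻² w` one has `f = s⁻¹ (w + w²/3)` and `ℓ = s⁻² (s³ + w)`, with nonvanishing
analytic factors, so the orders are `-1` and `-2`, and a negative order forces `‖f‖ → ∞`.
-/

noncomputable def quadraticRoot (b c : ℂ → ℂ) (s : ℂ) : ℂ :=
  (-b s - (b s ^ 2 - 4 * c s) ^ (2⁻¹ : ℂ)) / 2

lemma quadraticRoot_sq_add (b c : ℂ → ℂ) (s : ℂ) :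
    quadraticRoot b c s ^ 2 + b s * quadraticRoot b c s + c s = 0 := by
  have hsqrt := cpow_ofNat_inv_pow (b s ^ 2 - 4 * c s) 2
  unfold quadraticRoot
  linear_combination hsqrt / 4

lemma AnalyticAt.quadraticRoot {b c : ℂ → ℂ} {z : ℂ} (hb : AnalyticAt ℂ b z)
    (hc : AnalyticAt ℂ c z) (hdisc : b z ^ 2 - 4 * c z ∈ slitPlane) :
    AnalyticAt ℂ (quadraticRoot b c) z :=
  ((hb.neg.sub ((hb.pow 2).sub (analyticAt_const.mul hc) |>.cpow analyticAt_const hdisc)).div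
    analyticAt_const two_ne_zero)

lemma tendsto_norm_atTop_of_eventuallyEq_zpow_smul {𝕜 E : Type*} [NontriviallyNormedField 𝕜]
    [NormedAddCommGroup E] [NormedSpace 𝕜 E] {f g : 𝕜 → E} {x : 𝕜} {n : ℤ} (hn : n < 0)
    (hg : AnalyticAt 𝕜 g x) (hgx : g x ≠ 0) (hfg : ∀ᶠ z in 𝓝[≠] x, f z = (z - x) ^ n • g z) :
    Tendsto (fun z => ‖f z‖) (𝓝[≠] x) atTop := by
  have hmero : MeromorphicAt f x :=
    MeromorphicAt.iff_eventuallyEq_zpow_smul_analyticAt.mpr ⟨n, g, hg, hfg⟩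
  have horder : meromorphicOrderAt f x = n :=
    (meromorphicOrderAt_eq_int_iff hmero).mpr ⟨g, hg, hgx, hfg⟩
  exact tendsto_norm_atTop_iff_cobounded.mpr
    (tendsto_cobounded_of_meromorphicOrderAt_neg (by simpa [horder] using hn))

lemma polar_subst_zpow_neg_two {s : ℂ} (hs : s ≠ 0) (w : ℂ) :
    s ^ (-2 : ℤ) * w - s + s ^ 2 * (s ^ (-2 : ℤ) * w) ^ 2 - (2 / 3) * s ^ 3 * (s ^ (-2 : ℤ) * w) =
      s ^ (-2 : ℤ) * (w ^ 2 + (1 - (2 / 3) * s ^ 3) * w + -s ^ 3) := by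
  simp only [zpow_neg, zpow_ofNat]
  field_simp
  ring

lemma f_subst_zpow_neg_two {s : ℂ} (hs : s ≠ 0) (w : ℂ) :
    s * (s ^ (-2 : ℤ) * w) + (1 / 3) * s ^ 3 * (s ^ (-2 : ℤ) * w) ^ 2 =
      s ^ (-1 : ℤ) * (w + (1 / 3) * w ^ 2) := by
  simp only [zpow_neg, zpow_ofNat]
  field_simp

lemma sum_subst_zpow_neg_two {s : ℂ} (hs : s ≠ 0) (w : ℂ) :
    s + s ^ (-2 : ℤ) * w = s ^ (-2 : ℤ) * (s ^ 3 + w) := by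
  simp only [zpow_neg, zpow_ofNat]
  field_simp

/-- For `f(x,y) = xy + (1/3)x³y²`, `ℓ(x,y) = x + y`: there is a branch of the
polar curve `{y − x + x²y² − (2/3)x³y = 0}` at infinity parametrized by `x(s) = s`,
`y(s) = −1/s² + h.o.t.` (i.e. `y(s) = s^{-2}·w(s)` with `w(0) = −1`), along which
`ord₀(f∘γ) = −1`, `ord₀(ℓ∘γ) = −2`; in particular `‖f∘γ‖ → ∞` as `s → 0`, and
`ord₀(f∘γ) − ord₀(ℓ∘γ) = 1`. -/
theorem stmt_13 :
    ∃ (y w : ℂ → ℂ), AnalyticAt ℂ w 0 ∧ w 0 = -1 ∧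
      (∀ᶠ s in 𝓝[≠] (0 : ℂ), y s = s ^ (-2 : ℤ) * w s) ∧
      (∀ᶠ s in 𝓝[≠] (0 : ℂ), y s - s + s ^ 2 * (y s) ^ 2 - (2 / 3) * s ^ 3 * y s = 0) ∧
      (∃ u : ℂ → ℂ, AnalyticAt ℂ u 0 ∧ u 0 ≠ 0 ∧
        ∀ᶠ s in 𝓝[≠] (0 : ℂ), s * y s + (1 / 3) * s ^ 3 * (y s) ^ 2 = s ^ (-1 : ℤ) * u s) ∧
      (∃ v : ℂ → ℂ, AnalyticAt ℂ v 0 ∧ v 0 ≠ 0 ∧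
        ∀ᶠ s in 𝓝[≠] (0 : ℂ), s + y s = s ^ (-2 : ℤ) * v s) ∧
      Filter.Tendsto (fun s : ℂ => ‖s * y s + (1 / 3) * s ^ 3 * (y s) ^ 2‖)
        (𝓝[≠] (0 : ℂ)) Filter.atTop ∧
      ((-1 : ℤ) - (-2) = 1) := by
  set w := quadraticRoot (fun s => 1 - (2 / 3) * s ^ 3) (fun s => -s ^ 3)
  have hw : AnalyticAt ℂ w 0 := AnalyticAt.quadraticRoot (by fun_prop) (by fun_prop) (by simp)
  have hw0 : w 0 = -1 := by norm_num [w, quadraticRoot]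
  have hu : AnalyticAt ℂ (fun s => w s + (1 / 3) * w s ^ 2) 0 := by fun_prop
  have hu0 : w 0 + (1 / 3) * w 0 ^ 2 ≠ 0 := by norm_num [hw0]
  have hpotential : ∀ᶠ s in 𝓝[≠] (0 : ℂ), s * (s ^ (-2 : ℤ) * w s) +
      (1 / 3) * s ^ 3 * (s ^ (-2 : ℤ) * w s) ^ 2 = s ^ (-1 : ℤ) * (w s + (1 / 3) * w s ^ 2) :=
    eventually_mem_nhdsWithin.mono fun s hs => f_subst_zpow_neg_two hs (w s)
  refine ⟨fun s => s ^ (-2 : ℤ) * w s, w, hw, hw0, .of_forall fun _ => rfl, ?_,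
    ⟨_, hu, hu0, hpotential⟩, ⟨fun s => s ^ 3 + w s, by fun_prop, by simp [hw0], ?_⟩, ?_, by norm_num⟩
  · filter_upwards [eventually_mem_nhdsWithin] with s hs
    rw [polar_subst_zpow_neg_two hs, quadraticRoot_sq_add, mul_zero]
  · exact eventually_mem_nhdsWithin.mono fun s hs => sum_subst_zpow_neg_two hs (w s)
  · refine tendsto_norm_atTop_of_eventuallyEq_zpow_smul (by norm_num : (-1 : ℤ) < 0) hu hu0 ?_
    simpa only [sub_zero, smul_eq_mul] using hpotential
end

section
/- Let f(x,y) = xy + (1/3)x³y² + x⁶ on ℂ². Then the singular locus Sing f = {∂f/∂x = ∂f/∂y = 0} consists of exactly 8 points, and each of them is a nondegenerate (Morse) critical point of f. -/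
/-- The polynomial `f(x,y) = xy + (1/3)x³y² + x⁶`. -/
noncomputable def F16 (x y : ℂ) : ℂ := x * y + (1 / 3) * x ^ 3 * y ^ 2 + x ^ 6

/-- Partial derivative of `F16` in `x`. -/
noncomputable def F16x (p : ℂ × ℂ) : ℂ := deriv (fun x => F16 x p.2) p.1

/-- Partial derivative of `F16` in `y`. -/
noncomputable def F16y (p : ℂ × ℂ) : ℂ := deriv (fun y => F16 p.1 y) p.2

/-- Singular locus of `F16`. -/
noncomputable def Sing16 : Set (ℂ × ℂ) := {p | F16x p = 0 ∧ F16y p = 0}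

/-- Hessian determinant of `F16`. -/
noncomputable def Hess16 (p : ℂ × ℂ) : ℂ :=
  deriv (fun x => F16x (x, p.2)) p.1 * deriv (fun y => F16y (p.1, y)) p.2
    - deriv (fun y => F16x (p.1, y)) p.2 * deriv (fun x => F16y (x, p.2)) p.1

/-!
On `Sing f`, `∂f/∂y = x (1 + (2/3) x²y)`, so either `x = 0`, and then `∂f/∂x = y` forces
`y = 0`, or `x²y = -3/2`. In the second case `x² ∂f/∂x = x²y + (x²y)² + 6x⁷` vanishes
exactly when `x⁷ = -1/8`, which has seven distinct roots, each determining `y`. Substituting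
the same two relations into the Hessian gives `-1` at the origin and `-7/2` at the other
seven points.
-/

open Polynomial in
theorem ncard_setOf_pow_eq {K : Type*} [Field K] [IsAlgClosed K] {n : ℕ} (hn : (n : K) ≠ 0)
    {a : K} (ha : a ≠ 0) : {x : K | x ^ n = a}.ncard = n := by
  have hp : X ^ n - C a ≠ 0 :=
    X_pow_sub_C_ne_zero (Nat.pos_of_ne_zero (by rintro rfl; simp at hn)) a
  have hroots : {x : K | x ^ n = a} = (X ^ n - C a).rootSet K := by
    ext x
    simp [mem_rootSet, hp, sub_eq_zero]
  rw [hroots, Set.ncard_eq_toFinset_card', Set.toFinset_card,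
    card_rootSet_eq_natDegree (separable_X_pow_sub_C a hn ha) (IsAlgClosed.splits _),
    natDegree_X_pow_sub_C]

lemma F16x_eq (x y : ℂ) : F16x (x, y) = y + x ^ 2 * y ^ 2 + 6 * x ^ 5 := by
  simp (disch := fun_prop) only [F16x, F16, deriv_fun_add, deriv_fun_mul, deriv_const,
    deriv_id'', deriv_fun_pow]
  ring

lemma F16y_eq (x y : ℂ) : F16y (x, y) = x + (2 / 3) * x ^ 3 * y := by
  simp (disch := fun_prop) only [F16y, F16, deriv_fun_add, deriv_fun_mul, deriv_const,
    deriv_id'', deriv_fun_pow, deriv_const_mul_id]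
  ring

lemma Hess16_eq (x y : ℂ) :
    Hess16 (x, y) = (2 * x * y ^ 2 + 30 * x ^ 4) * ((2 / 3) * x ^ 3) - (1 + 2 * x ^ 2 * y) ^ 2 := by
  simp (disch := fun_prop) only [Hess16, F16x_eq, F16y_eq, deriv_fun_add, deriv_fun_mul,
    deriv_const, deriv_id'', deriv_fun_pow, deriv_const_mul_id]
  ring

lemma mem_Sing16_iff {x y : ℂ} :
    (x, y) ∈ Sing16 ↔ (x = 0 ∧ y = 0) ∨ (x ^ 7 = -1 / 8 ∧ x ^ 2 * y = -3 / 2) := by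
  simp only [Sing16, Set.mem_ofPred_eq, F16x_eq, F16y_eq]
  constructor
  · rintro ⟨hx, hy⟩
    rcases eq_or_ne x 0 with rfl | hx0
    · left
      exact ⟨rfl, by simpa using hx⟩
    · right
      have hxy : x ^ 2 * y = -3 / 2 := by
        have : x * (x ^ 2 * y + 3 / 2) = 0 := by linear_combination (3 / 2 : ℂ) * hy
        linear_combination (mul_eq_zero.1 this).resolve_left hx0
      exact ⟨by linear_combination (x ^ 2 * hx - (x ^ 2 * y - 1 / 2) * hxy) / 6, hxy⟩
  · rintro (⟨rfl, rfl⟩ | ⟨hx, hxy⟩)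
    · simp
    · have hx0 : x ≠ 0 := by rintro rfl; norm_num at hx
      refine ⟨mul_left_cancel₀ (pow_ne_zero 2 hx0) ?_,
        by linear_combination (2 / 3 * x) * hxy⟩
      linear_combination 6 * hx + (x ^ 2 * y - 1 / 2) * hxy

lemma Sing16_eq :
    Sing16 = insert (0, 0) ((fun x : ℂ => (x, -3 / (2 * x ^ 2))) '' {x | x ^ 7 = -1 / 8}) := by
  ext ⟨x, y⟩
  rw [mem_Sing16_iff]
  simp only [Set.mem_insert_iff, Prod.mk.injEq, Set.mem_image, Set.mem_ofPred_eq, ↓existsAndEq,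
    true_and]
  refine or_congr_right (and_congr_right fun hx => ?_)
  have hx0 : x ≠ 0 := by rintro rfl; norm_num at hx
  rw [div_eq_iff (mul_ne_zero two_ne_zero (pow_ne_zero 2 hx0))]
  exact ⟨fun h => by linear_combination -2 * h, fun h => by linear_combination -h / 2⟩

lemma Hess16_eq_of_pow_seven {x y : ℂ} (hx : x ^ 7 = -1 / 8) (hxy : x ^ 2 * y = -3 / 2) :
    Hess16 (x, y) = -7 / 2 := by
  rw [Hess16_eq]
  linear_combination 20 * hx - 8 / 3 * x ^ 2 * y * hxy

/-- The singular locus of `f(x,y) = xy + (1/3)x³y² + x⁶` consists of exactly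
8 points, and each of them is a nondegenerate (Morse) critical point of `f`. -/
theorem stmt_16 :
    Sing16.Finite ∧ Sing16.ncard = 8 ∧ ∀ p ∈ Sing16, Hess16 p ≠ 0 := by
  have hroots : {x : ℂ | x ^ 7 = -1 / 8}.ncard = 7 :=
    ncard_setOf_pow_eq (by norm_num) (by norm_num)
  have hzero :
      ((0 : ℂ), (0 : ℂ)) ∉ (fun x : ℂ => (x, -3 / (2 * x ^ 2))) '' {x | x ^ 7 = -1 / 8} := by
    rintro ⟨x, hx, h⟩
    obtain rfl : x = 0 := congrArg Prod.fst h
    norm_num at hx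
  have hcard : Sing16.ncard = 8 := by
    rw [Sing16_eq, Set.ncard_insert_of_notMem hzero ((Set.finite_of_ncard_pos (by omega)).image _),
      Set.ncard_image_of_injective _ fun _ _ h => congrArg Prod.fst h, hroots]
  refine ⟨Set.finite_of_ncard_pos (by omega), hcard, ?_⟩
  rintro ⟨x, y⟩ hp
  rcases mem_Sing16_iff.1 hp with ⟨rfl, rfl⟩ | ⟨hx, hxy⟩
  · norm_num [Hess16_eq]
  · norm_num [Hess16_eq_of_pow_seven hx hxy]
end
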